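/- arXiv:1312.1748 — 3 statements merged into one kernel-verified Lean document; each statement's English description precedes it below -/
import Mathlib

section
/- Fix real numbers s, t with t > 0 and real numbers M₁, M₂ ≥ 0. Then the set of triples (r, c, χ) ∈ ℤ³ such that r ≥ 1, 0 ≤ c − rs ≤ M₂, 2χr − r² − 3rc − c² ≤ 1, and r t²/2 − (s²/2 − 1) r + (3/2 + s) c − χ ≤ M₁, is finite. -/
/-! Adding `2r` times the degree bound to the Euler-form bound eliminates `χ` and leaves
`r²t² ≤ 1 + (c - rs)² - r² + 2rM₁`; as `0 ≤ c - rs ≤ M₂` and `r ≥ 1`, this bounds `r`. For each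
`r` the slope condition confines `c` to an interval of length `M₂`, and for each `(r, c)` the two
bounds confine `χ` to an interval. -/

theorem Int.finite_setOf_cast_mem_Icc (a b : ℝ) : {n : ℤ | (n : ℝ) ∈ Set.Icc a b}.Finite := by
  convert Set.finite_Icc ⌈a⌉ ⌊b⌋ using 1
  ext n
  simp [Int.ceil_le, Int.le_floor]

theorem rank_mul_sq_le_of_euler_form_le {s t M₁ r c χ : ℝ} (hr : 1 ≤ r)
    (heuler : 2 * χ * r - r ^ 2 - 3 * r * c - c ^ 2 ≤ 1)
    (hdeg : r * t ^ 2 / 2 - (s ^ 2 / 2 - 1) * r + (3 / 2 + s) * c - χ ≤ M₁) :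
    r * t ^ 2 ≤ 2 * M₁ + 1 + (c - r * s) ^ 2 := by
  have hdeg' := mul_le_mul_of_nonneg_left hdeg (by linarith : 0 ≤ 2 * r)
  have hr' := mul_nonneg (sub_nonneg.2 hr) (by positivity : 0 ≤ 1 + (c - r * s) ^ 2)
  refine le_of_mul_le_mul_left ?_ (by linarith : 0 < r)
  nlinarith

theorem euler_char_mem_Icc_of_euler_form_le {s t M₁ r c χ : ℝ} (hr : 0 < r)
    (heuler : 2 * χ * r - r ^ 2 - 3 * r * c - c ^ 2 ≤ 1)
    (hdeg : r * t ^ 2 / 2 - (s ^ 2 / 2 - 1) * r + (3 / 2 + s) * c - χ ≤ M₁) :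
    χ ∈ Set.Icc (r * t ^ 2 / 2 - (s ^ 2 / 2 - 1) * r + (3 / 2 + s) * c - M₁)
      ((1 + r ^ 2 + 3 * r * c + c ^ 2) / (2 * r)) := by
  refine ⟨by linarith, ?_⟩
  rw [le_div_iff₀ (by positivity)]
  linarith

theorem stmt2_general (s t M₁ M₂ : ℝ) (ht : 0 < t) :
    {p : ℤ × ℤ × ℤ | 1 ≤ p.1 ∧
      0 ≤ (p.2.1 : ℝ) - (p.1 : ℝ) * s ∧ (p.2.1 : ℝ) - (p.1 : ℝ) * s ≤ M₂ ∧
      2 * p.2.2 * p.1 - p.1 ^ 2 - 3 * p.1 * p.2.1 - p.2.1 ^ 2 ≤ 1 ∧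
      (p.1 : ℝ) * t ^ 2 / 2 - (s ^ 2 / 2 - 1) * (p.1 : ℝ) + (3 / 2 + s) * (p.2.1 : ℝ)
        - (p.2.2 : ℝ) ≤ M₁}.Finite := by
  refine ((Int.finite_setOf_cast_mem_Icc 1 ((2 * M₁ + 1 + M₂ ^ 2) / t ^ 2)).biUnion
    fun r _ => (Int.finite_setOf_cast_mem_Icc (r * s) (r * s + M₂)).biUnion
    fun c _ => (Int.finite_setOf_cast_mem_Icc
      (r * t ^ 2 / 2 - (s ^ 2 / 2 - 1) * r + (3 / 2 + s) * c - M₁)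
      ((1 + r ^ 2 + 3 * r * c + c ^ 2) / (2 * r))).image fun χ => (r, c, χ)).subset ?_
  rintro ⟨r, c, χ⟩ ⟨hr, hx₀, hxM, heuler, hdeg⟩
  have hr : (1 : ℝ) ≤ r := by exact_mod_cast hr
  have heuler : 2 * (χ : ℝ) * r - r ^ 2 - 3 * r * c - c ^ 2 ≤ 1 := by exact_mod_cast heuler
  have hx : ((c : ℝ) - r * s) ^ 2 ≤ M₂ ^ 2 := pow_le_pow_left₀ hx₀ hxM 2
  have hrank : (r : ℝ) ≤ (2 * M₁ + 1 + M₂ ^ 2) / t ^ 2 := by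
    rw [le_div_iff₀ (by positivity)]
    linarith [rank_mul_sq_le_of_euler_form_le hr heuler hdeg]
  simp only [Set.mem_iUnion, Set.mem_image, Prod.mk.injEq]
  exact ⟨r, ⟨hr, hrank⟩, c, ⟨by linarith, by linarith⟩, χ,
    euler_char_mem_Icc_of_euler_form_le (by linarith) heuler hdeg, rfl, rfl, rfl⟩

/-- Fix real `s, t` with `t > 0` and reals `M₁, M₂ ≥ 0`. Then the set of
triples `(r, c, χ) ∈ ℤ³` such that `r ≥ 1`, `0 ≤ c − rs ≤ M₂`,
`2χr − r² − 3rc − c² ≤ 1`, and `r t²/2 − (s²/2 − 1) r + (3/2 + s) c − χ ≤ M₁`,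
is finite. -/
theorem stmt2 (s t M₁ M₂ : ℝ) (ht : 0 < t) (hM₁ : 0 ≤ M₁) (hM₂ : 0 ≤ M₂) :
    {p : ℤ × ℤ × ℤ | 1 ≤ p.1 ∧
      0 ≤ (p.2.1 : ℝ) - (p.1 : ℝ) * s ∧ (p.2.1 : ℝ) - (p.1 : ℝ) * s ≤ M₂ ∧
      2 * p.2.2 * p.1 - p.1 ^ 2 - 3 * p.1 * p.2.1 - p.2.1 ^ 2 ≤ 1 ∧
      (p.1 : ℝ) * t ^ 2 / 2 - (s ^ 2 / 2 - 1) * (p.1 : ℝ) + (3 / 2 + s) * (p.2.1 : ℝ)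
        - (p.2.2 : ℝ) ≤ M₁}.Finite :=
  stmt2_general s t M₁ M₂ ht
end

section
/- Fix an integer n and define f(n, s, j) = j(2n + s²) + s(2n + j²) for real s and integer j, and the vectors a(k) = (2n + (k−1)(k−4), −(k−1)), b(k) = (2n + (k−2)(k+1), −(k+1)) in ℝ². Then for all integers k and real s: −f(n, s, k−1)·b(k) + f(n, s, k+1)·a(k) = 2(2n − (k−1)(k+1))·(2n + s² + 3s, s). Consequently, if s < 0 and (k−1)(k+1) < 2n, this vector is a positive scalar multiple of (m, −1/2), where m = −(2n + s²)/(2s) − 3/2; moreover the semicircular wall for the invariant (1, 0, 1−n) passing through (s, 0) has center x = (s² + 2n)/(2s) = −m − 3/2. -/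
/-!
The identity is a polynomial identity in `n, k, s`, checked componentwise. For `s ≠ 0`,
`(2n + s² + 3s, s) = −2s · (m, −1/2)`, so the scalar `2(2n − (k−1)(k+1))·(−2s)` is positive when
`s < 0` and `(k−1)(k+1) < 2n`. Walls for `(1, 0, 1−n)` are the semicircles with center `x` and
radius² `x² − 2n`; the one through `(s, 0)` has `x = (s² + 2n)/(2s)`.
-/

/-- `f(n, s, j) = j(2n + s²) + s(2n + j²)`, arising from the character `ρ_{s,0+,k}`. -/
def fchar (n : ℤ) (s : ℝ) (j : ℤ) : ℝ :=
  (j : ℝ) * (2 * (n : ℝ) + s ^ 2) + s * (2 * (n : ℝ) + (j : ℝ) ^ 2)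

/-- The divisor class `A_k = (2n + (k−1)(k−4))H − (k−1)Δ` as a vector in `ℝ²`. -/
def avecR (n k : ℤ) : ℝ × ℝ := ((2 * n + (k - 1) * (k - 4) : ℤ) , (-(k - 1) : ℤ))

/-- The divisor class `B_k = (2n + (k−2)(k+1))H − (k+1)Δ` as a vector in `ℝ²`. -/
def bvecR (n k : ℤ) : ℝ × ℝ := ((2 * n + (k - 2) * (k + 1) : ℤ), (-(k + 1) : ℤ))

theorem neg_fchar_smul_bvecR_add_fchar_smul_avecR (n k : ℤ) (s : ℝ) :
    (-(fchar n s (k - 1))) • bvecR n k + (fchar n s (k + 1)) • avecR n k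
      = ((2 * (2 * n - (k - 1) * (k + 1)) : ℤ) : ℝ)
          • ((2 * (n : ℝ) + s ^ 2 + 3 * s, s) : ℝ × ℝ) := by
  simp only [fchar, avecR, bvecR, Prod.smul_mk, Prod.mk_add_mk, smul_eq_mul, Prod.mk.injEq]
  push_cast
  constructor <;> ring

theorem wallVector_eq_smul (n : ℤ) {s : ℝ} (hs : s ≠ 0) :
    ((2 * (n : ℝ) + s ^ 2 + 3 * s, s) : ℝ × ℝ)
      = (-2 * s) • ((-(2 * (n : ℝ) + s ^ 2) / (2 * s) - 3 / 2, -(1 / 2)) : ℝ × ℝ) := by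
  simp only [Prod.smul_mk, smul_eq_mul, Prod.mk.injEq]
  constructor
  · field_simp
    ring
  · field_simp

theorem sq_sub_wallCenter (n : ℤ) {s : ℝ} (hs : s ≠ 0) :
    (s - (s ^ 2 + 2 * (n : ℝ)) / (2 * s)) ^ 2
      = ((s ^ 2 + 2 * (n : ℝ)) / (2 * s)) ^ 2 - 2 * (n : ℝ) := by
  field_simp
  ring

/-- For all integers `k` and real `s`:
`−f(n, s, k−1)·b(k) + f(n, s, k+1)·a(k) = 2(2n − (k−1)(k+1))·(2n + s² + 3s, s)`.
Consequently, if `s < 0` and `(k−1)(k+1) < 2n`, this vector is a positive scalar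
multiple of `(m, −1/2)` where `m = −(2n + s²)/(2s) − 3/2`; moreover the semicircular
wall for `(1, 0, 1−n)` through `(s, 0)` has center `x = (s² + 2n)/(2s) = −m − 3/2`. -/
theorem stmt13 (n : ℤ) (k : ℤ) (s : ℝ) :
    (-(fchar n s (k - 1))) • bvecR n k + (fchar n s (k + 1)) • avecR n k
      = ((2 * (2 * n - (k - 1) * (k + 1)) : ℤ) : ℝ)
          • ((2 * (n : ℝ) + s ^ 2 + 3 * s, s) : ℝ × ℝ) ∧
    (s < 0 → (k - 1) * (k + 1) < 2 * n →
      (∃ c : ℝ, 0 < c ∧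
        (-(fchar n s (k - 1))) • bvecR n k + (fchar n s (k + 1)) • avecR n k
          = c • ((-(2 * (n : ℝ) + s ^ 2) / (2 * s) - 3 / 2, -(1 / 2)) : ℝ × ℝ)) ∧
      (s - (s ^ 2 + 2 * (n : ℝ)) / (2 * s)) ^ 2
        = ((s ^ 2 + 2 * (n : ℝ)) / (2 * s)) ^ 2 - 2 * (n : ℝ) ∧
      (s ^ 2 + 2 * (n : ℝ)) / (2 * s)
        = -(-(2 * (n : ℝ) + s ^ 2) / (2 * s) - 3 / 2) - 3 / 2) := by
  have hvec := neg_fchar_smul_bvecR_add_fchar_smul_avecR n k s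
  refine ⟨hvec, fun hs hk => ⟨?_, sq_sub_wallCenter n hs.ne, by ring⟩⟩
  have hcoeff : (0 : ℝ) < ((2 * (2 * n - (k - 1) * (k + 1)) : ℤ) : ℝ) := by
    exact_mod_cast (by omega : (0 : ℤ) < 2 * (2 * n - (k - 1) * (k + 1)))
  refine ⟨_ * (-2 * s), mul_pos hcoeff (by linarith), ?_⟩
  rw [hvec, wallVector_eq_smul n hs.ne, smul_smul]
end

section
/- Let V₋₁, V₀, V₁ be finite-dimensional complex vector spaces, let a, b, c ∈ ℂ, and let I₁, I₂, I₃ : V₋₁ → V₀ and J₁, J₂, J₃ : V₀ → V₁ be linear maps. Suppose there exist linear maps M₁, M₂, M₃ : V₋₁ → V₁ such that, with indices taken mod 3, for each i ∈ {1,2,3}: J_i I_{i+1} = a·M_i, J_{i+1} I_i = b·M_i, and J_{i+2} I_{i+2} = c·M_i. Define the dual maps I'₁ = J₂ᵀ, I'₂ = J₁ᵀ, I'₃ = J₃ᵀ : V₁* → V₀* and J'₁ = I₂ᵀ, J'₂ = I₁ᵀ, J'₃ = I₃ᵀ : V₀* → V₋₁*. Then the maps M'₁ = M₁ᵀ, M'₂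 = M₃ᵀ, M'₃ = M₂ᵀ : V₁* → V₋₁* satisfy, for each i ∈ {1,2,3}: J'_i I'_{i+1} = a·M'_i, J'_{i+1} I'_i = b·M'_i, and J'_{i+2} I'_{i+2} = c·M'_i. -/
open LinearMap

/-!
Transposition reverses composition, so transposing the nine relations `J_p I_q ∈ span` gives
the relations for the transposed maps. Indexing by `ZMod 3`, the swap of the paper reads
`I'ᵢ = J₋ᵢᵀ`, `J'ᵢ = I₋ᵢᵀ`, `M'ᵢ = M₋ᵢ₋₁ᵀ`, and the relations for `(I', J', M')` at index `i`
are the transposes of those for `(I, J, M)` at index `-i - 1`.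
-/

theorem LinearMap.dualMap_comp_dualMap_eq_smul {R M₁ M₂ M₃ : Type*} [CommSemiring R]
    [AddCommMonoid M₁] [Module R M₁] [AddCommMonoid M₂] [Module R M₂]
    [AddCommMonoid M₃] [Module R M₃] {f : M₁ →ₗ[R] M₂} {g : M₂ →ₗ[R] M₃} {m : M₁ →ₗ[R] M₃}
    {a : R} (h : g ∘ₗ f = a • m) : f.dualMap ∘ₗ g.dualMap = a • m.dualMap := by
  rw [dualMap_comp_dualMap, h, dualMap_def, dualMap_def, map_smul]

theorem ZMod.funext_three {α : Type*} {f g : ZMod 3 → α}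
    (h₀ : f 0 = g 0) (h₁ : f 1 = g 1) (h₂ : f 2 = g 2) : f = g := by
  funext i
  fin_cases i
  exacts [h₀, h₁, h₂]

section Sklyanin

variable {R U V W : Type*} [CommSemiring R]
  [AddCommMonoid U] [Module R U] [AddCommMonoid V] [Module R V] [AddCommMonoid W] [Module R W]

def SklyaninRelations (a b c : R) (I : ZMod 3 → U →ₗ[R] V) (J : ZMod 3 → V →ₗ[R] W)
    (M : ZMod 3 → U →ₗ[R] W) : Prop :=
  ∀ i : ZMod 3,
    J i ∘ₗ I (i + 1) = a • M i ∧ J (i + 1) ∘ₗ I i = b • M i ∧ J (i + 2) ∘ₗ I (i + 2) = c • M i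

theorem SklyaninRelations.dualMap {a b c : R} {I : ZMod 3 → U →ₗ[R] V}
    {J : ZMod 3 → V →ₗ[R] W} {M : ZMod 3 → U →ₗ[R] W} (h : SklyaninRelations a b c I J M) :
    SklyaninRelations a b c (fun i => (J (-i)).dualMap) (fun i => (I (-i)).dualMap)
      (fun i => (M (-i - 1)).dualMap) := by
  intro i
  have h₁ : -i - 1 + 1 = -i := by ring
  have h₂ : -(i + 1) = -i - 1 := by ring
  have h₃ : -(i + 2) = -i - 1 + 2 := by revert i; decide
  obtain ⟨ha, hb, hc⟩ := h (-i - 1)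
  rw [h₁] at ha hb
  dsimp only
  rw [h₂, h₃]
  exact ⟨dualMap_comp_dualMap_eq_smul ha, dualMap_comp_dualMap_eq_smul hb,
    dualMap_comp_dualMap_eq_smul hc⟩

end Sklyanin

theorem stmt16_general (Vm Vz Vo : Type*)
    [AddCommGroup Vm] [Module ℂ Vm]
    [AddCommGroup Vz] [Module ℂ Vz]
    [AddCommGroup Vo] [Module ℂ Vo]
    (a b c : ℂ)
    (I : ZMod 3 → Vm →ₗ[ℂ] Vz) (J : ZMod 3 → Vz →ₗ[ℂ] Vo)
    (M : ZMod 3 → Vm →ₗ[ℂ] Vo)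
    (hM : ∀ i : ZMod 3,
      J i ∘ₗ I (i + 1) = a • M i ∧
      J (i + 1) ∘ₗ I i = b • M i ∧
      J (i + 2) ∘ₗ I (i + 2) = c • M i)
    (I' : ZMod 3 → Module.Dual ℂ Vo →ₗ[ℂ] Module.Dual ℂ Vz)
    (J' : ZMod 3 → Module.Dual ℂ Vz →ₗ[ℂ] Module.Dual ℂ Vm)
    (M' : ZMod 3 → Module.Dual ℂ Vo →ₗ[ℂ] Module.Dual ℂ Vm)
    (hI' : I' 1 = (J 2).dualMap ∧ I' 2 = (J 1).dualMap ∧ I' 0 = (J 0).dualMap)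
    (hJ' : J' 1 = (I 2).dualMap ∧ J' 2 = (I 1).dualMap ∧ J' 0 = (I 0).dualMap)
    (hM' : M' 1 = (M 1).dualMap ∧ M' 2 = (M 0).dualMap ∧ M' 0 = (M 2).dualMap) :
    ∀ i : ZMod 3,
      J' i ∘ₗ I' (i + 1) = a • M' i ∧
      J' (i + 1) ∘ₗ I' i = b • M' i ∧
      J' (i + 2) ∘ₗ I' (i + 2) = c • M' i := by
  obtain ⟨hI'₁, hI'₂, hI'₀⟩ := hI'
  obtain ⟨hJ'₁, hJ'₂, hJ'₀⟩ := hJ'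
  obtain ⟨hM'₁, hM'₂, hM'₀⟩ := hM'
  have hI : I' = fun i => (J (-i)).dualMap := ZMod.funext_three hI'₀ hI'₁ hI'₂
  have hJ : J' = fun i => (I (-i)).dualMap := ZMod.funext_three hJ'₀ hJ'₁ hJ'₂
  have hM'' : M' = fun i => (M (-i - 1)).dualMap := ZMod.funext_three hM'₀ hM'₁ hM'₂
  subst hI hJ hM''
  exact SklyaninRelations.dualMap hM

/-- Let `Vm, Vz, Vo` be finite-dimensional complex vector spaces,
`a, b, c ∈ ℂ`, and `I₁, I₂, I₃ : Vm → Vz`, `J₁, J₂, J₃ : Vz → Vo` linear maps,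
indexed by `ZMod 3` (with the index `3` of the paper corresponding to `0`).
Suppose there exist `M₁, M₂, M₃ : Vm → Vo` such that for each `i`:
`J_i I_{i+1} = a·M_i`, `J_{i+1} I_i = b·M_i`, `J_{i+2} I_{i+2} = c·M_i`.
Define dual maps `I'₁ = J₂ᵀ, I'₂ = J₁ᵀ, I'₃ = J₃ᵀ` and `J'₁ = I₂ᵀ, J'₂ = I₁ᵀ, J'₃ = I₃ᵀ`.
Then `M'₁ = M₁ᵀ, M'₂ = M₃ᵀ, M'₃ = M₂ᵀ` satisfy, for each `i`:
`J'_i I'_{i+1} = a·M'_i`, `J'_{i+1} I'_i = b·M'_i`, `J'_{i+2} I'_{i+2} = c·M'_i`. -/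
theorem stmt16 (Vm Vz Vo : Type*)
    [AddCommGroup Vm] [Module ℂ Vm] [FiniteDimensional ℂ Vm]
    [AddCommGroup Vz] [Module ℂ Vz] [FiniteDimensional ℂ Vz]
    [AddCommGroup Vo] [Module ℂ Vo] [FiniteDimensional ℂ Vo]
    (a b c : ℂ)
    (I : ZMod 3 → Vm →ₗ[ℂ] Vz) (J : ZMod 3 → Vz →ₗ[ℂ] Vo)
    (M : ZMod 3 → Vm →ₗ[ℂ] Vo)
    (hM : ∀ i : ZMod 3,
      J i ∘ₗ I (i + 1) = a • M i ∧
      J (i + 1) ∘ₗ I i = b • M i ∧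
      J (i + 2) ∘ₗ I (i + 2) = c • M i)
    (I' : ZMod 3 → Module.Dual ℂ Vo →ₗ[ℂ] Module.Dual ℂ Vz)
    (J' : ZMod 3 → Module.Dual ℂ Vz →ₗ[ℂ] Module.Dual ℂ Vm)
    (M' : ZMod 3 → Module.Dual ℂ Vo →ₗ[ℂ] Module.Dual ℂ Vm)
    (hI' : I' 1 = (J 2).dualMap ∧ I' 2 = (J 1).dualMap ∧ I' 0 = (J 0).dualMap)
    (hJ' : J' 1 = (I 2).dualMap ∧ J' 2 = (I 1).dualMap ∧ J' 0 = (I 0).dualMap)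
    (hM' : M' 1 = (M 1).dualMap ∧ M' 2 = (M 0).dualMap ∧ M' 0 = (M 2).dualMap) :
    ∀ i : ZMod 3,
      J' i ∘ₗ I' (i + 1) = a • M' i ∧
      J' (i + 1) ∘ₗ I' i = b • M' i ∧
      J' (i + 2) ∘ₗ I' (i + 2) = c • M' i :=
  stmt16_general Vm Vz Vo a b c I J M hM I' J' M' hI' hJ' hM'
end
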